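/- Let H be a well-covered finite simple graph without isolated vertices such that α(H) is odd, let v be a vertex of H, and let G = Tr(H,v), so that α(G) = α(H) + 1 and α(H_v) = α(H) − 1 are both even. Then (−1)^{α(G)/2}·I(G, −1/2) ≥ 0 if and only if (−1)^{α(H_v)/2}·I(H_v, −1/2) ≥ 0. (That is, G satisfies the Charney–Davis inequality if and only if H_v does.) -/
import Mathlib


open scoped Classical

/-- A finset of vertices is independent if no two of its members are adjacent. -/
def IsIndep {W : Type*} (G : SimpleGraph W) (s : Finset W) : Prop :=
  ∀ x ∈ s, ∀ y ∈ s, ¬ G.Adj x y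

/-- A maximal independent set: independent and not properly contained in another
independent set. -/
def IsMaxIndep {W : Type*} (G : SimpleGraph W) (s : Finset W) : Prop :=
  IsIndep G s ∧ ∀ t : Finset W, IsIndep G t → s ⊆ t → t = s

/-- The independence number `α(G)`: the maximum size of an independent set. -/
noncomputable def indepNum {W : Type*} (G : SimpleGraph W) [Fintype W] : ℕ :=
  sSup {n | ∃ s : Finset W, IsIndep G s ∧ s.card = n}

/-- Trung's construction `Tr(H, v)`: three new vertices `a = Sum.inr 0`, `b = Sum.inr 1`,
`c = Sum.inr 2` are added to `H`; `c` is joined to `b` and to every neighbor of `v`,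
`b` is joined to `a`, and `a` is joined to `v`. -/
def Tr {V : Type*} (H : SimpleGraph V) (v : V) : SimpleGraph (V ⊕ Fin 3) :=
  SimpleGraph.fromRel (fun x y =>
    match x, y with
    | Sum.inl x, Sum.inl y => H.Adj x y
    | Sum.inl x, Sum.inr i => (i = 0 ∧ x = v) ∨ (i = 2 ∧ H.Adj x v)
    | Sum.inr i, Sum.inr j => (i = 0 ∧ j = 1) ∨ (i = 1 ∧ j = 2)
    | _, _ => False)

/-- The set of vertices remaining after deleting the closed neighborhood `N[F]`
of a set `F` of vertices. -/
def offNbhd {V : Type*} (G : SimpleGraph V) (F : Set V) : Set V :=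
  {w | w ∉ F ∧ ∀ u ∈ F, ¬ G.Adj u w}

/-- `G_F`: the induced subgraph of `G` on `V(G) \ N[F]`. -/
def delNbhd {V : Type*} (G : SimpleGraph V) (F : Set V) : SimpleGraph (offNbhd G F) :=
  G.induce (offNbhd G F)

/-- `H_v = H \ N[v]`. -/
def delVert {V : Type*} (H : SimpleGraph V) (v : V) : SimpleGraph (offNbhd H {v}) :=
  delNbhd H {v}

/-- The independence polynomial `I(G, x) = Σ_i a_i x^i` of a finite graph,
as a polynomial over `ℚ`. -/
noncomputable def indepPoly {W : Type*} (G : SimpleGraph W) [Fintype W] : Polynomial ℚ :=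
  ∑ s ∈ Finset.univ.filter (fun s : Finset W => IsIndep G s),
    (Polynomial.X : Polynomial ℚ) ^ s.card

/-- `a_i(G)`: the number of independent sets of size `i`, indexed by `ℤ`
(so that it is `0` for `i < 0`). -/
noncomputable def numIndep {W : Type*} (G : SimpleGraph W) [Fintype W] (i : ℤ) : ℕ :=
  (Finset.univ.filter (fun s : Finset W => IsIndep G s ∧ (s.card : ℤ) = i)).card

/-- A finite graph is well-covered if every maximal independent set has size `α(G)`. -/
def WellCovered {W : Type*} (G : SimpleGraph W) [Fintype W] : Prop :=
  ∀ s : Finset W, IsMaxIndep G s → s.card = indepNum G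

/-- A finite graph is a `W₂` graph if it has at least two vertices and every pair of
disjoint independent sets is contained in a pair of disjoint maximum independent sets. -/
def IsW2 {W : Type*} (G : SimpleGraph W) [Fintype W] : Prop :=
  2 ≤ Fintype.card W ∧
    ∀ A B : Finset W, IsIndep G A → IsIndep G B → Disjoint A B →
      ∃ A' B' : Finset W, IsIndep G A' ∧ IsIndep G B' ∧ Disjoint A' B' ∧
        A ⊆ A' ∧ B ⊆ B' ∧ A'.card = indepNum G ∧ B'.card = indepNum G

section CDHelpers

open Finset

set_option linter.unusedSectionVars false
set_option maxHeartbeats 1000000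

variable {W : Type*} (G : SimpleGraph W) [Fintype W]

lemma indep_empty : IsIndep G (∅ : Finset W) := by intro x hx; simp at hx

lemma indepNum_bdd : BddAbove {n | ∃ s : Finset W, IsIndep G s ∧ s.card = n} := by
  refine ⟨Fintype.card W, ?_⟩
  rintro n ⟨s, _, rfl⟩
  exact Finset.card_le_univ s

lemma card_le_indepNum {s : Finset W} (hs : IsIndep G s) : s.card ≤ indepNum G :=
  le_csSup (indepNum_bdd G) ⟨s, hs, rfl⟩

lemma exists_indepNum : ∃ s : Finset W, IsIndep G s ∧ s.card = indepNum G := by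
  have h0 : (0 : ℕ) ∈ {n | ∃ s : Finset W, IsIndep G s ∧ s.card = n} :=
    ⟨∅, indep_empty G, by simp⟩
  exact Nat.sSup_mem ⟨0, h0⟩ (indepNum_bdd G)

/-- The weighted count of finsets satisfying `p`, with a fixed (classical)
decidability instance so that all occurrences are syntactically uniform. -/
noncomputable def csum {W : Type*} [Fintype W] (t : ℚ) (p : Finset W → Prop) : ℚ :=
  ∑ A ∈ Finset.univ.filter p, t ^ A.card

lemma eval_indepPoly (t : ℚ) :
    (indepPoly G).eval t = csum t (fun s : Finset W => IsIndep G s) := by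
  rw [indepPoly, Polynomial.eval_finset_sum, csum]
  refine Finset.sum_congr ?_ (fun s _ => by simp)
  ext s
  simp only [Finset.mem_filter, Finset.mem_univ, true_and]

lemma exists_max_indep_containing (s0 : Finset W) (h0 : IsIndep G s0) :
    ∃ s, IsMaxIndep G s ∧ s0 ⊆ s := by
  obtain ⟨s, hs, hmax⟩ := Finset.exists_max_image
    (Finset.univ.filter (fun s => IsIndep G s ∧ s0 ⊆ s)) Finset.card
    ⟨s0, by simp [h0]⟩
  simp only [Finset.mem_filter, Finset.mem_univ, true_and] at hs
  refine ⟨s, ⟨hs.1, fun u hu hsu => ?_⟩, hs.2⟩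
  have hu' : u ∈ Finset.univ.filter (fun s => IsIndep G s ∧ s0 ⊆ s) := by
    simp only [Finset.mem_filter, Finset.mem_univ, true_and]
    exact ⟨hu, hs.2.trans hsu⟩
  exact (Finset.eq_of_subset_of_card_le hsu (hmax u hu')).symm

lemma csum_congr {W : Type*} [Fintype W] (t : ℚ) {p q : Finset W → Prop}
    (h : ∀ s, p s ↔ q s) : csum t p = csum t q := by
  unfold csum
  exact Finset.sum_congr (Finset.filter_congr fun s _ => h s) fun _ _ => rfl

/-- splitting an independence-type sum by membership of a vertex `u`. -/
lemma split_sum (q : Finset W → Prop) (u : W) (t : ℚ) :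
    csum t q
      = csum t (fun s => q s ∧ u ∉ s)
        + t * csum t (fun s : Finset W => u ∉ s ∧ q (insert u s)) := by
  unfold csum
  rw [← Finset.sum_filter_add_sum_filter_not (Finset.univ.filter q)
    (fun s => u ∉ s) (fun s : Finset W => t ^ s.card)]
  congr 1
  · refine Finset.sum_congr ?_ (fun _ _ => rfl)
    ext s
    simp only [Finset.mem_filter, Finset.mem_univ, true_and]
    try tauto
  · rw [Finset.mul_sum]
    refine Finset.sum_bij' (fun s _ => s.erase u) (fun s _ => insert u s) ?_ ?_ ?_ ?_ ?_
    · intro s hs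
      simp only [Finset.mem_filter, Finset.mem_univ, true_and, not_not] at hs ⊢
      refine ⟨Finset.notMem_erase _ _, ?_⟩
      rw [Finset.insert_erase hs.2]
      exact hs.1
    · intro s hs
      simp only [Finset.mem_filter, Finset.mem_univ, true_and, not_not] at hs ⊢
      exact ⟨hs.2, Finset.mem_insert_self _ _⟩
    · intro s hs
      simp only [Finset.mem_filter, Finset.mem_univ, true_and, not_not] at hs
      exact Finset.insert_erase hs.2
    · intro s hs
      simp only [Finset.mem_filter, Finset.mem_univ, true_and] at hs
      exact Finset.erase_insert hs.1
    · intro s hs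
      simp only [Finset.mem_filter, Finset.mem_univ, true_and, not_not] at hs
      have h1 : 1 ≤ s.card := Finset.card_pos.mpr ⟨u, hs.2⟩
      have h2 : s.card = (s.erase u).card + 1 := by
        rw [Finset.card_erase_of_mem hs.2]; omega
      rw [h2, pow_succ']

end CDHelpers

section CDMain

open Finset

set_option linter.unusedSectionVars false

variable {V : Type*} [Fintype V] (H : SimpleGraph V) (v : V)

lemma mem_offNbhd_iff (x : V) : x ∈ offNbhd H {v} ↔ x ≠ v ∧ ¬ H.Adj v x := by
  simp [offNbhd]

lemma delVert_adj (a b : ↥(offNbhd H {v})) :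
    (delVert H v).Adj a b ↔ H.Adj (a : V) (b : V) := by
  simp [delVert, delNbhd, SimpleGraph.induce]

lemma tr_adj_inl_inl (x y : V) :
    (Tr H v).Adj (Sum.inl x) (Sum.inl y) ↔ H.Adj x y := by
  rw [Tr, SimpleGraph.fromRel_adj]
  constructor
  · rintro ⟨h1, h2 | h2⟩
    · exact h2
    · exact h2.symm
  · intro h
    exact ⟨by simp [H.ne_of_adj h], Or.inl h⟩

lemma tr_adj_inl_inr (x : V) (i : Fin 3) :
    (Tr H v).Adj (Sum.inl x) (Sum.inr i) ↔ (i = 0 ∧ x = v) ∨ (i = 2 ∧ H.Adj x v) := by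
  rw [Tr, SimpleGraph.fromRel_adj]
  simp

lemma tr_adj_inr_inr (i j : Fin 3) :
    (Tr H v).Adj (Sum.inr i) (Sum.inr j) ↔
      ((i = 0 ∧ j = 1) ∨ (i = 1 ∧ j = 2) ∨ (j = 0 ∧ i = 1) ∨ (j = 1 ∧ i = 2)) := by
  rw [Tr, SimpleGraph.fromRel_adj]
  fin_cases i <;> fin_cases j <;> simp

lemma isIndep_toLeft {s : Finset (V ⊕ Fin 3)} (hs : IsIndep (Tr H v) s) :
    IsIndep H s.toLeft := by
  intro x hx y hy hadj
  rw [Finset.mem_toLeft] at hx hy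
  exact hs _ hx _ hy ((tr_adj_inl_inl H v x y).2 hadj)

lemma isIndep_disjSum (A : Finset V) (B : Finset (Fin 3)) :
    IsIndep (Tr H v) (A.disjSum B) ↔
      IsIndep H A ∧ (∀ i ∈ B, ∀ j ∈ B, ¬ (Tr H v).Adj (Sum.inr i) (Sum.inr j)) ∧
      (∀ x ∈ A, ∀ i ∈ B, ¬ (Tr H v).Adj (Sum.inl x) (Sum.inr i)) := by
  constructor
  · intro h
    refine ⟨fun x hx y hy hxy => h _ (Finset.inl_mem_disjSum.2 hx) _
        (Finset.inl_mem_disjSum.2 hy) ((tr_adj_inl_inl H v x y).2 hxy),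
      fun i hi j hj => h _ (Finset.inr_mem_disjSum.2 hi) _ (Finset.inr_mem_disjSum.2 hj),
      fun x hx i hi => h _ (Finset.inl_mem_disjSum.2 hx) _ (Finset.inr_mem_disjSum.2 hi)⟩
  · rintro ⟨h1, h2, h3⟩ x hx y hy
    rcases x with x | i <;> rcases y with y | j
    · rw [Finset.inl_mem_disjSum] at hx hy
      rw [tr_adj_inl_inl]
      exact h1 x hx y hy
    · rw [Finset.inl_mem_disjSum] at hx
      rw [Finset.inr_mem_disjSum] at hy
      exact h3 x hx j hy
    · rw [Finset.inr_mem_disjSum] at hx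
      rw [Finset.inl_mem_disjSum] at hy
      intro hadj
      exact h3 y hy i hx hadj.symm
    · rw [Finset.inr_mem_disjSum] at hx hy
      exact h2 i hx j hy

lemma isIndep_dS_empty (A : Finset V) :
    IsIndep (Tr H v) (A.disjSum ∅) ↔ IsIndep H A := by
  rw [isIndep_disjSum]
  simp

lemma isIndep_dS_0 (A : Finset V) :
    IsIndep (Tr H v) (A.disjSum {0}) ↔ (IsIndep H A ∧ v ∉ A) := by
  rw [isIndep_disjSum]
  simp only [Finset.mem_singleton, forall_eq, tr_adj_inl_inr, tr_adj_inr_inr]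
  constructor
  · rintro ⟨h1, -, h3⟩
    refine ⟨h1, fun hv => ?_⟩
    exact h3 v hv (Or.inl ⟨trivial, rfl⟩)
  · rintro ⟨h1, h2⟩
    refine ⟨h1, by simp, fun x hx => ?_⟩
    rintro (⟨-, rfl⟩ | ⟨h, -⟩)
    · exact h2 hx
    · simp at h

lemma isIndep_dS_1 (A : Finset V) :
    IsIndep (Tr H v) (A.disjSum {1}) ↔ IsIndep H A := by
  rw [isIndep_disjSum]
  simp only [Finset.mem_singleton, forall_eq, tr_adj_inl_inr, tr_adj_inr_inr]
  constructor
  · rintro ⟨h1, -, -⟩; exact h1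
  · intro h1
    refine ⟨h1, by simp, fun x hx => ?_⟩
    rintro (⟨h, -⟩ | ⟨h, -⟩) <;> simp at h

lemma isIndep_dS_2 (A : Finset V) :
    IsIndep (Tr H v) (A.disjSum {2}) ↔ (IsIndep H A ∧ ∀ x ∈ A, ¬ H.Adj x v) := by
  rw [isIndep_disjSum]
  simp only [Finset.mem_singleton, forall_eq, tr_adj_inl_inr, tr_adj_inr_inr]
  constructor
  · rintro ⟨h1, -, h3⟩
    exact ⟨h1, fun x hx hadj => h3 x hx (Or.inr ⟨trivial, hadj⟩)⟩
  · rintro ⟨h1, h2⟩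
    refine ⟨h1, by simp, fun x hx => ?_⟩
    rintro (⟨h, -⟩ | ⟨-, h⟩)
    · simp at h
    · exact h2 x hx h

lemma isIndep_dS_02 (A : Finset V) :
    IsIndep (Tr H v) (A.disjSum {0, 2}) ↔
      (IsIndep H A ∧ v ∉ A ∧ ∀ x ∈ A, ¬ H.Adj x v) := by
  rw [isIndep_disjSum]
  simp only [Finset.mem_insert, Finset.mem_singleton, tr_adj_inl_inr, tr_adj_inr_inr]
  constructor
  · rintro ⟨h1, -, h3⟩
    refine ⟨h1, fun hv => h3 v hv 0 (Or.inl rfl) (Or.inl ⟨rfl, rfl⟩),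
      fun x hx hadj => h3 x hx 2 (Or.inr rfl) (Or.inr ⟨rfl, hadj⟩)⟩
  · rintro ⟨h1, h2, h3⟩
    refine ⟨h1, ?_, ?_⟩
    · rintro i (rfl | rfl) j (rfl | rfl) <;> simp
    · rintro x hx i (rfl | rfl)
      · rintro (⟨-, rfl⟩ | ⟨h, -⟩)
        · exact h2 hx
        · simp at h
      · rintro (⟨h, -⟩ | ⟨-, h⟩)
        · simp at h
        · exact h3 x hx h

lemma isIndep_dS_false (A : Finset V) (B : Finset (Fin 3)) (i j : Fin 3)
    (hi : i ∈ B) (hj : j ∈ B) (hadj : (Tr H v).Adj (Sum.inr i) (Sum.inr j)) :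
    ¬ IsIndep (Tr H v) (A.disjSum B) := fun h =>
  h _ (Finset.inr_mem_disjSum.2 hi) _ (Finset.inr_mem_disjSum.2 hj) hadj

end CDMain

section CDMain2

open Finset

set_option linter.unusedSectionVars false
set_option maxHeartbeats 1000000

variable {V : Type*} [Fintype V] (H : SimpleGraph V) (v : V)

lemma insert_indep_iff (A : Finset V) :
    IsIndep H (insert v A) ↔ (IsIndep H A ∧ ∀ x ∈ A, ¬ H.Adj x v) := by
  constructor
  · intro h
    exact ⟨fun x hx y hy => h x (Finset.mem_insert_of_mem hx) y (Finset.mem_insert_of_mem hy),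
      fun x hx => h x (Finset.mem_insert_of_mem hx) v (Finset.mem_insert_self _ _)⟩
  · rintro ⟨h1, h2⟩ x hx y hy hadj
    rcases Finset.mem_insert.1 hx with hxv | hx
    · rcases Finset.mem_insert.1 hy with hyv | hy
      · exact H.irrefl (by rwa [hxv, hyv] at hadj)
      · exact h2 y hy (show H.Adj v y by rwa [hxv] at hadj).symm
    · rcases Finset.mem_insert.1 hy with hyv | hy
      · exact h2 x hx (by rwa [hyv] at hadj)
      · exact h1 x hx y hy hadj

lemma sub_indep_card_le (A : Finset V) (h1 : IsIndep H A) (h2 : v ∉ A)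
    (h3 : ∀ x ∈ A, ¬ H.Adj x v) : A.card ≤ indepNum (delVert H v) := by
  have hsub : ∀ x ∈ A, x ∈ offNbhd H {v} := fun x hx =>
    (mem_offNbhd_iff H v x).2 ⟨fun he => h2 (he ▸ hx), fun ha => h3 x hx ha.symm⟩
  have hcard : (A.subtype (fun x => x ∈ offNbhd H {v})).card = A.card := by
    rw [Finset.card_subtype, Finset.filter_true_of_mem hsub]
  have hind : IsIndep (delVert H v) (A.subtype (fun x => x ∈ offNbhd H {v})) := by
    intro x hx y hy hadj
    rw [Finset.mem_subtype] at hx hy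
    exact h1 _ hx _ hy ((delVert_adj H v x y).1 hadj)
  calc A.card = _ := hcard.symm
    _ ≤ indepNum (delVert H v) := card_le_indepNum _ hind

lemma map_subtype_props (s : Finset ↥(offNbhd H {v})) (hs : IsIndep (delVert H v) s) :
    IsIndep H (s.map (Function.Embedding.subtype _)) ∧
      v ∉ s.map (Function.Embedding.subtype _) ∧
      ∀ x ∈ s.map (Function.Embedding.subtype _), ¬ H.Adj x v := by
  refine ⟨?_, ?_, ?_⟩
  · intro x hx y hy hadj
    rw [Finset.mem_map] at hx hy
    obtain ⟨a, ha, rfl⟩ := hx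
    obtain ⟨b, hb, rfl⟩ := hy
    exact hs a ha b hb ((delVert_adj H v a b).2 hadj)
  · intro hv
    rw [Finset.mem_map] at hv
    obtain ⟨a, ha, hav⟩ := hv
    simp only [Function.Embedding.coe_subtype] at hav
    exact ((mem_offNbhd_iff H v a).1 a.2).1 hav
  · intro x hx hadj
    rw [Finset.mem_map] at hx
    obtain ⟨a, ha, rfl⟩ := hx
    exact ((mem_offNbhd_iff H v a).1 a.2).2 hadj.symm

lemma Q_eq (t : ℚ) :
    csum t (fun A : Finset V => IsIndep H A ∧ v ∉ A ∧ ∀ x ∈ A, ¬ H.Adj x v)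
      = (indepPoly (delVert H v)).eval t := by
  rw [eval_indepPoly]
  unfold csum
  refine Finset.sum_bij' (fun A _ => A.subtype (fun x => x ∈ offNbhd H {v}))
    (fun s _ => s.map (Function.Embedding.subtype _)) ?_ ?_ ?_ ?_ ?_
  · intro A hA
    simp only [Finset.mem_filter, Finset.mem_univ, true_and] at hA ⊢
    intro x hx y hy hadj
    rw [Finset.mem_subtype] at hx hy
    exact hA.1 _ hx _ hy ((delVert_adj H v x y).1 hadj)
  · intro s hs
    simp only [Finset.mem_filter, Finset.mem_univ, true_and] at hs ⊢
    exact map_subtype_props H v s hs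
  · intro A hA
    simp only [Finset.mem_filter, Finset.mem_univ, true_and] at hA
    have hsub : ∀ x ∈ A, x ∈ offNbhd H {v} := fun x hx =>
      (mem_offNbhd_iff H v x).2 ⟨fun he => hA.2.1 (he ▸ hx),
        fun ha => hA.2.2 x hx ha.symm⟩
    rw [Finset.subtype_map, Finset.filter_true_of_mem hsub]
  · intro s hs
    ext a
    simp only [Finset.mem_subtype, Finset.mem_map, Function.Embedding.coe_subtype]
    constructor
    · rintro ⟨b, hb, he⟩
      have : b = a := Subtype.ext he
      exact this ▸ hb
    · intro ha
      exact ⟨a, ha, rfl⟩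
  · intro A hA
    simp only [Finset.mem_filter, Finset.mem_univ, true_and] at hA
    have hsub : ∀ x ∈ A, x ∈ offNbhd H {v} := fun x hx =>
      (mem_offNbhd_iff H v x).2 ⟨fun he => hA.2.1 (he ▸ hx),
        fun ha => hA.2.2 x hx ha.symm⟩
    rw [Finset.card_subtype, Finset.filter_true_of_mem hsub]

lemma fiber_sum (B : Finset (Fin 3)) (C : Finset V → Prop)
    (hC : ∀ A : Finset V, IsIndep (Tr H v) (A.disjSum B) ↔ C A) (t : ℚ) :
    ∑ s ∈ (Finset.univ.filter
        (fun s : Finset (V ⊕ Fin 3) => IsIndep (Tr H v) s)).filter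
        (fun s => s.toRight = B), t ^ s.card
      = t ^ B.card * csum t C := by
  rw [csum, Finset.mul_sum]
  refine Finset.sum_bij' (fun s _ => s.toLeft) (fun A _ => A.disjSum B) ?_ ?_ ?_ ?_ ?_
  · intro s hs
    simp only [Finset.mem_filter, Finset.mem_univ, true_and] at hs ⊢
    have he : s.toLeft.disjSum B = s := by
      rw [← hs.2, Finset.toLeft_disjSum_toRight]
    refine (hC _).1 ?_
    rw [he]
    exact hs.1
  · intro A hA
    simp only [Finset.mem_filter, Finset.mem_univ, true_and] at hA ⊢
    exact ⟨(hC A).2 hA, Finset.toRight_disjSum⟩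
  · intro s hs
    simp only [Finset.mem_filter, Finset.mem_univ, true_and] at hs
    rw [← hs.2, Finset.toLeft_disjSum_toRight]
  · intro A hA
    exact Finset.toLeft_disjSum
  · intro s hs
    simp only [Finset.mem_filter, Finset.mem_univ, true_and] at hs
    have hc : s.card = s.toLeft.card + B.card := by
      rw [← hs.2, Finset.card_toLeft_add_card_toRight]
    rw [hc, pow_add, mul_comm]

lemma fiber_zero (B : Finset (Fin 3)) (i j : Fin 3) (hi : i ∈ B) (hj : j ∈ B)
    (hadj : (Tr H v).Adj (Sum.inr i) (Sum.inr j)) (t : ℚ) :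
    ∑ s ∈ (Finset.univ.filter
        (fun s : Finset (V ⊕ Fin 3) => IsIndep (Tr H v) s)).filter
        (fun s => s.toRight = B), t ^ s.card = 0 := by
  have he : (Finset.univ.filter
      (fun s : Finset (V ⊕ Fin 3) => IsIndep (Tr H v) s)).filter
      (fun s => s.toRight = B) = ∅ := by
    rw [Finset.filter_eq_empty_iff]
    intro s hs hB
    simp only [Finset.mem_filter, Finset.mem_univ, true_and] at hs
    have hi' : Sum.inr i ∈ s := Finset.mem_toRight.1 (hB ▸ hi)
    have hj' : Sum.inr j ∈ s := Finset.mem_toRight.1 (hB ▸ hj)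
    exact hs _ hi' _ hj' hadj
  rw [he, Finset.sum_empty]

lemma tr_adj_01 : (Tr H v).Adj (Sum.inr 0) (Sum.inr 1) := by
  rw [tr_adj_inr_inr]; exact Or.inl ⟨rfl, rfl⟩

lemma tr_adj_12 : (Tr H v).Adj (Sum.inr 1) (Sum.inr 2) := by
  rw [tr_adj_inr_inr]; exact Or.inr (Or.inl ⟨rfl, rfl⟩)

lemma eval_Tr (t : ℚ) :
    (indepPoly (Tr H v)).eval t
      = (1 + 2*t) * csum t (fun A : Finset V => IsIndep H A)
        + (t + t^2) * csum t
            (fun A : Finset V => IsIndep H A ∧ v ∉ A ∧ ∀ x ∈ A, ¬ H.Adj x v) := by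
  rw [eval_indepPoly]
  conv_lhs => rw [csum]
  have hmap : ∀ s ∈ Finset.univ.filter
      (fun s : Finset (V ⊕ Fin 3) => IsIndep (Tr H v) s),
      s.toRight ∈ (Finset.univ : Finset (Finset (Fin 3))) := fun _ _ => Finset.mem_univ _
  rw [← Finset.sum_fiberwise_of_maps_to hmap
    (fun s : Finset (V ⊕ Fin 3) => t ^ s.card)]
  rw [show (Finset.univ : Finset (Finset (Fin 3)))
      = {∅, {0}, {1}, {2}, {0,1}, {0,2}, {1,2}, {0,1,2}} from by decide]
  rw [Finset.sum_insert (by decide), Finset.sum_insert (by decide),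
    Finset.sum_insert (by decide), Finset.sum_insert (by decide),
    Finset.sum_insert (by decide), Finset.sum_insert (by decide),
    Finset.sum_insert (by decide), Finset.sum_singleton]
  rw [fiber_sum H v ∅ _ (isIndep_dS_empty H v) t,
    fiber_sum H v {0} _ (isIndep_dS_0 H v) t,
    fiber_sum H v {1} _ (isIndep_dS_1 H v) t,
    fiber_sum H v {2} _ (isIndep_dS_2 H v) t,
    fiber_sum H v {0,2} _ (isIndep_dS_02 H v) t,
    fiber_zero H v {0,1} 0 1 (by decide) (by decide) (tr_adj_01 H v) t,
    fiber_zero H v {1,2} 1 2 (by decide) (by decide) (tr_adj_12 H v) t,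
    fiber_zero H v {0,1,2} 0 1 (by decide) (by decide) (tr_adj_01 H v) t]
  rw [show ((∅ : Finset (Fin 3))).card = 0 from rfl,
    show (({0} : Finset (Fin 3))).card = 1 from rfl,
    show (({1} : Finset (Fin 3))).card = 1 from rfl,
    show (({2} : Finset (Fin 3))).card = 1 from rfl,
    show (({0,2} : Finset (Fin 3))).card = 2 from by decide]
  have hN := split_sum (fun A : Finset V => IsIndep H A) v t
  have hS := split_sum (fun A : Finset V => IsIndep H A ∧ ∀ x ∈ A, ¬ H.Adj x v) v t
  have e2 : csum t (fun s : Finset V => v ∉ s ∧ IsIndep H (insert v s))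
      = csum t (fun A : Finset V => IsIndep H A ∧ v ∉ A ∧ ∀ x ∈ A, ¬ H.Adj x v) :=
    csum_congr t (fun A => by rw [insert_indep_iff H v A]; tauto)
  have e1 : csum t (fun s : Finset V => (IsIndep H s ∧ ∀ x ∈ s, ¬ H.Adj x v) ∧ v ∉ s)
      = csum t (fun A : Finset V => IsIndep H A ∧ v ∉ A ∧ ∀ x ∈ A, ¬ H.Adj x v) :=
    csum_congr t (fun A => by tauto)
  have e3 : csum t (fun s : Finset V => v ∉ s ∧
        (IsIndep H (insert v s) ∧ ∀ x ∈ insert v s, ¬ H.Adj x v))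
      = csum t (fun A : Finset V => IsIndep H A ∧ v ∉ A ∧ ∀ x ∈ A, ¬ H.Adj x v) :=
    csum_congr t (fun A => by
      constructor
      · rintro ⟨hv, hins, -⟩
        obtain ⟨hA, hAv⟩ := (insert_indep_iff H v A).1 hins
        exact ⟨hA, hv, hAv⟩
      · rintro ⟨hA, hv, hAv⟩
        refine ⟨hv, ⟨(insert_indep_iff H v A).2 ⟨hA, hAv⟩, ?_⟩⟩
        intro x hx
        rcases Finset.mem_insert.1 hx with hxv | hx
        · rw [hxv]
          exact H.irrefl
        · exact hAv x hx)
  linear_combination (-t) * hN + t * hS + (-t^2) * e2 + t * e1 + (t^2) * e3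

end CDMain2

section CDMain3

open Finset

set_option linter.unusedSectionVars false
set_option maxHeartbeats 1000000

variable {V : Type*} [Fintype V] (H : SimpleGraph V) (v : V)

lemma indepNum_delVert_add_one (hwc : WellCovered H) :
    indepNum (delVert H v) + 1 = indepNum H := by
  apply le_antisymm
  · obtain ⟨s, hs, hcard⟩ := exists_indepNum (delVert H v)
    obtain ⟨hA, hvA, hAv⟩ := map_subtype_props H v s hs
    have hins : IsIndep H (insert v (s.map (Function.Embedding.subtype _))) :=
      (insert_indep_iff H v _).2 ⟨hA, hAv⟩
    have hc := card_le_indepNum H hins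
    rw [Finset.card_insert_of_notMem hvA, Finset.card_map, hcard] at hc
    exact hc
  · have hvind : IsIndep H {v} := by
      intro x hx y hy
      rw [Finset.mem_singleton] at hx hy
      subst hx; subst hy
      exact H.irrefl
    obtain ⟨s, hmax, hsub⟩ := exists_max_indep_containing H {v} hvind
    have hcard := hwc s hmax
    have hv : v ∈ s := hsub (Finset.mem_singleton_self v)
    have h1 : IsIndep H (s.erase v) := fun x hx y hy =>
      hmax.1 x (Finset.mem_of_mem_erase hx) y (Finset.mem_of_mem_erase hy)
    have h3 : ∀ x ∈ s.erase v, ¬ H.Adj x v := fun x hx hadj =>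
      hmax.1 x (Finset.mem_of_mem_erase hx) v hv hadj
    have hle := sub_indep_card_le H v _ h1 (Finset.notMem_erase v s) h3
    rw [Finset.card_erase_of_mem hv, hcard] at hle
    have hpos : 1 ≤ s.card := Finset.card_pos.2 ⟨v, hv⟩
    rw [hcard] at hpos
    omega

lemma indepNum_Tr_eq (hwc : WellCovered H) (hone : 1 ≤ indepNum H) :
    indepNum (Tr H v) = indepNum H + 1 := by
  have hdel := indepNum_delVert_add_one H v hwc
  apply le_antisymm
  · obtain ⟨s, hs, hcard⟩ := exists_indepNum (Tr H v)
    rw [← hcard]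
    have hA : IsIndep H s.toLeft := isIndep_toLeft H v hs
    have hcards : s.toLeft.card + s.toRight.card = s.card :=
      Finset.card_toLeft_add_card_toRight
    have hAle := card_le_indepNum H hA
    by_cases hB : s.toRight.card ≤ 1
    · omega
    · push_neg at hB
      have h1B : (1 : Fin 3) ∉ s.toRight := by
        intro h1B
        obtain ⟨j, hj, hne⟩ := Finset.exists_mem_ne hB 1
        have hj' : Sum.inr j ∈ s := Finset.mem_toRight.1 hj
        have h1' : Sum.inr (1 : Fin 3) ∈ s := Finset.mem_toRight.1 h1B
        fin_cases j
        · exact hs _ hj' _ h1' (tr_adj_01 H v)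
        · exact hne rfl
        · exact hs _ h1' _ hj' (tr_adj_12 H v)
      have hsub : s.toRight ⊆ {0, 2} := by
        intro i hi
        fin_cases i
        · exact Finset.mem_insert_self _ _
        · exact absurd hi h1B
        · exact Finset.mem_insert_of_mem (Finset.mem_singleton_self _)
      have hc2 : ({0, 2} : Finset (Fin 3)).card = 2 := by decide
      have hBeq : s.toRight = {0, 2} :=
        Finset.eq_of_subset_of_card_le hsub (by omega)
      have h0 : Sum.inr (0 : Fin 3) ∈ s :=
        Finset.mem_toRight.1 (by rw [hBeq]; exact Finset.mem_insert_self _ _)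
      have h2 : Sum.inr (2 : Fin 3) ∈ s :=
        Finset.mem_toRight.1
          (by rw [hBeq]; exact Finset.mem_insert_of_mem (Finset.mem_singleton_self _))
      have hvA : v ∉ s.toLeft := fun hv =>
        hs _ (Finset.mem_toLeft.1 hv) _ h0 ((tr_adj_inl_inr H v v 0).2 (Or.inl ⟨rfl, rfl⟩))
      have hAv : ∀ x ∈ s.toLeft, ¬ H.Adj x v := fun x hx hadj =>
        hs _ (Finset.mem_toLeft.1 hx) _ h2 ((tr_adj_inl_inr H v x 2).2 (Or.inr ⟨rfl, hadj⟩))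
      have hle := sub_indep_card_le H v _ hA hvA hAv
      have hB2 : s.toRight.card = 2 := by rw [hBeq]; exact hc2
      omega
  · obtain ⟨s, hs, hcard⟩ := exists_indepNum H
    have hind : IsIndep (Tr H v) (s.disjSum {1}) := (isIndep_dS_1 H v s).2 hs
    have hc := card_le_indepNum _ hind
    rw [Finset.card_disjSum] at hc
    have h1 : ({1} : Finset (Fin 3)).card = 1 := rfl
    omega

end CDMain3

theorem charneyDavis_Tr_iff {V : Type*} [Fintype V] (H : SimpleGraph V)
    (hwc : WellCovered H) (hiso : ∀ u : V, ∃ w, H.Adj u w) (hodd : Odd (indepNum H))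
    (v : V) :
    0 ≤ (-1 : ℚ) ^ (indepNum (Tr H v) / 2) * (indepPoly (Tr H v)).eval (-(1 / 2) : ℚ) ↔
      0 ≤ (-1 : ℚ) ^ (indepNum (delVert H v) / 2) *
            (indepPoly (delVert H v)).eval (-(1 / 2) : ℚ) := by
  obtain ⟨m, hm⟩ := hodd
  have hone : 1 ≤ indepNum H := by omega
  have hdel := indepNum_delVert_add_one H v hwc
  have htr := indepNum_Tr_eq H v hwc hone
  have hTr2 : indepNum (Tr H v) / 2 = m + 1 := by omega
  have hDel2 : indepNum (delVert H v) / 2 = m := by omega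
  have hEval : (indepPoly (Tr H v)).eval (-(1 / 2) : ℚ)
      = -(1/4) * (indepPoly (delVert H v)).eval (-(1 / 2) : ℚ) := by
    rw [eval_Tr H v (-(1 / 2) : ℚ), Q_eq H v (-(1 / 2) : ℚ)]
    ring_nf
  rw [hTr2, hDel2, hEval, pow_succ]
  have hr : ((-1 : ℚ)) ^ m * (-1) * (-(1/4) * (indepPoly (delVert H v)).eval (-(1 / 2) : ℚ))
      = (1/4) * (((-1 : ℚ)) ^ m * (indepPoly (delVert H v)).eval (-(1 / 2) : ℚ)) := by
    ring
  rw [hr]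
  constructor <;> intro h <;> linarith
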